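/- Let m ≤ n be natural numbers, let k, ℓ be natural numbers, and let w : Fin k → ℚ, y ∈ ℚ, and x : Fin ℓ → ℚ be weights. Consider labellings of the complete graph on vertex set Fin n with k+1 symmetric colours (weights w for the first k and y for the last symmetric colour) and ℓ directed colours (weights x). Then the sum of the weights of those labellings in which the edges of the last symmetric colour form a perfect matching of the initial segment {u ∈ Fin n : u < m} equals F(m) · y^{⌊m/2⌋} · L_{k,ℓ}(C(n,2) − ⌊m/2⌋, w, x), where F(0) = 1, F(m) = (m−1)!! (double factorial) if m > 0 is even, and F(m) = 0 if m is odd. -/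
import Mathlib


/-- `L_{k,ℓ}(N, w, x)`, the weighted count of labellings of `N` edges with `k`
symmetric and `ℓ` directed colours; tuples summing to `N` are encoded as
functions `(Fin k ⊕ Fin ℓ) → Fin (N+1)`. -/
def Lkl (k l N : ℕ) (w : Fin k → ℚ) (x : Fin l → ℚ) : ℚ :=
  ∑ d ∈ Finset.univ.filter
      (fun d : (Fin k ⊕ Fin l) → Fin (N + 1) => ∑ s : Fin k ⊕ Fin l, (d s).val = N),
    (Nat.multinomial Finset.univ (fun s => (d s).val) : ℚ) *
      2 ^ (∑ q : Fin l, (d (Sum.inr q)).val) *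
      (∏ p : Fin k, w p ^ (d (Sum.inl p)).val) *
      (∏ q : Fin l, x q ^ (d (Sum.inr q)).val)

/-- `F(0) = 1`, `F(m) = (m−1)!!` for even `m > 0`, and `F(m) = 0` for odd `m`. -/
def Ffun (m : ℕ) : ℕ := if Even m then Nat.doubleFactorial (m - 1) else 0

/-- The edges of the complete graph on `Fin n`: two-element subsets. -/
abbrev Edge (n : ℕ) := {e : Finset (Fin n) // e.card = 2}

/-- A labelling assigns to each edge either a symmetric colour `p : Fin (k+1)`
or a directed colour `q : Fin ℓ` together with an orientation `v ∈ e`. -/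
def IsLabelling {n k l : ℕ} (c : Edge n → (Fin (k + 1) ⊕ (Fin l × Fin n))) : Prop :=
  ∀ (e : Edge n) (q : Fin l) (v : Fin n), c e = Sum.inr (q, v) → v ∈ e.val

/-- The edges of the last symmetric colour form a perfect matching of the
initial segment `{u : Fin n | u < m}`: they are pairwise disjoint two-element
subsets of it whose union is the whole initial segment. -/
def MatchesInitSeg {n k l : ℕ} (m : ℕ)
    (c : Edge n → (Fin (k + 1) ⊕ (Fin l × Fin n))) : Prop :=
  (∀ e : Edge n, c e = Sum.inl (Fin.last k) → ∀ u ∈ e.val, u.val < m) ∧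
  (∀ e e' : Edge n, c e = Sum.inl (Fin.last k) → c e' = Sum.inl (Fin.last k) →
    e ≠ e' → Disjoint e.val e'.val) ∧
  (∀ u : Fin n, u.val < m → ∃ e : Edge n, c e = Sum.inl (Fin.last k) ∧ u ∈ e.val)

open Finset

lemma Ffun_rec (m : ℕ) (hm : 1 ≤ m) : Ffun m = (m - 1) * Ffun (m - 2) := by
  unfold Ffun
  rcases Nat.lt_or_ge m 2 with h | h
  · interval_cases m <;> simp [Nat.doubleFactorial]
  · obtain ⟨m', rfl⟩ : ∃ m', m = m' + 2 := ⟨m - 2, by omega⟩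
    by_cases he : Even m'
    · rw [if_pos (by simpa [Nat.even_add] using he), if_pos (by simpa [Nat.even_add] using he)]
      rcases Nat.eq_zero_or_pos m' with rfl | hp
      · simp [Nat.doubleFactorial]
      · have h1 : m' + 2 - 1 = (m' - 1) + 2 := by omega
        rw [h1, Nat.doubleFactorial_add_two]
        have h2 : m' - 1 + 2 = m' + 2 - 1 := by omega
        have h3 : m' + 2 - 2 = m' := by omega
        rw [h2, h3]
    · rw [if_neg (by simpa [Nat.even_add] using he), if_neg (by simpa [Nat.even_add] using he),
        mul_zero]

lemma Lkl_eq (k l N : ℕ) (w : Fin k → ℚ) (x : Fin l → ℚ) :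
    Lkl k l N w x = (∑ p, w p + 2 * ∑ q, x q) ^ N := by
  classical
  unfold Lkl
  have hrhs : (∑ p, w p + 2 * ∑ q, x q)
      = ∑ s : Fin k ⊕ Fin l, Sum.elim w (fun q => 2 * x q) s := by
    rw [Fintype.sum_sum_type]
    simp [Finset.mul_sum]
  rw [hrhs, Finset.sum_pow_eq_sum_piAntidiag]
  have hle : ∀ e ∈ Finset.piAntidiag (Finset.univ : Finset (Fin k ⊕ Fin l)) N,
      ∀ s, e s ≤ N := by
    intro e he s
    rw [Finset.mem_piAntidiag] at he
    exact he.1 ▸ Finset.single_le_sum (f := e) (fun _ _ => Nat.zero_le _) (Finset.mem_univ s)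
  refine Finset.sum_bij' (fun d _ => fun s => (d s).val)
    (fun e he => fun s => (⟨e s, Nat.lt_succ_of_le (hle e he s)⟩ : Fin (N+1)))
    ?_ ?_ ?_ ?_ ?_
  · intro d hd
    rw [Finset.mem_filter] at hd
    rw [Finset.mem_piAntidiag]
    exact ⟨hd.2, fun i _ => Finset.mem_univ i⟩
  · intro e he
    rw [Finset.mem_filter]
    refine ⟨Finset.mem_univ _, ?_⟩
    rw [Finset.mem_piAntidiag] at he
    simpa using he.1
  · intro d hd; funext s; rfl
  · intro e he; funext s; rfl
  · intro d hd
    rw [Fintype.prod_sum_type]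
    simp only [Sum.elim_inl, Sum.elim_inr, mul_pow]
    rw [Finset.prod_mul_distrib, Finset.prod_pow_eq_pow_sum]
    ring

section Matchings

variable {α : Type*} [Fintype α] [DecidableEq α]

open scoped Classical in
noncomputable def matchings (s : Finset α) : Finset (Finset (Finset α)) :=
  Finset.univ.filter (fun M =>
    (∀ e ∈ M, e.card = 2) ∧ ((M : Set (Finset α)).PairwiseDisjoint id) ∧ M.sup id = s)

lemma mem_matchings {s : Finset α} {M : Finset (Finset α)} :
    M ∈ matchings s ↔
      (∀ e ∈ M, e.card = 2) ∧ ((M : Set (Finset α)).PairwiseDisjoint id) ∧ M.sup id = s := by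
  simp [matchings]

lemma subset_of_mem_matchings {s : Finset α} {M : Finset (Finset α)} {e : Finset α}
    (hM : M ∈ matchings s) (he : e ∈ M) : e ⊆ s := by
  rw [mem_matchings] at hM
  exact hM.2.2 ▸ Finset.le_sup (f := id) he

lemma card_matchings (s : Finset α) : (matchings s).card = Ffun s.card := by
  induction s using Finset.strongInduction with
  | _ s ih =>
  rcases s.eq_empty_or_nonempty with rfl | ⟨a, ha⟩
  · have : matchings (∅ : Finset α) = {∅} := by
      ext M
      rw [mem_matchings, Finset.mem_singleton]
      constructor
      · rintro ⟨h2, _, hsup⟩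
        rw [Finset.eq_empty_iff_forall_notMem]
        intro e heM
        have : e ⊆ ∅ := hsup ▸ Finset.le_sup (f := id) heM
        have he : e = ∅ := Finset.subset_empty.mp this
        have hc := h2 e heM
        rw [he] at hc
        simp at hc
      · rintro rfl; simp [Set.PairwiseDisjoint]
    rw [this]
    simp [Ffun, Nat.doubleFactorial]
  · -- key decomposition
    have key : matchings s = (s.erase a).biUnion
        (fun b => (matchings ((s.erase a).erase b)).image (insert {a, b})) := by
      ext M
      constructor
      · intro hM
        have hM' := hM
        rw [mem_matchings] at hM'
        obtain ⟨hcard, hpd, hsup⟩ := hM'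
        obtain ⟨e, heM, hae⟩ : ∃ e ∈ M, a ∈ e := by
          have : a ∈ M.sup id := hsup ▸ ha
          simpa using Finset.mem_sup.mp this
        obtain ⟨b, hab, heab⟩ : ∃ b, a ≠ b ∧ e = {a, b} := by
          obtain ⟨u, v, huv, huve⟩ := Finset.card_eq_two.mp (hcard e heM)
          rcases Finset.mem_insert.mp (huve ▸ hae) with rfl | h
          · exact ⟨v, huv, huve⟩
          · rw [Finset.mem_singleton] at h
            subst h
            exact ⟨u, huv.symm, by rw [huve]; ext; simp; tauto⟩
        have hbs : b ∈ s.erase a := by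
          refine Finset.mem_erase.mpr ⟨hab.symm, ?_⟩
          exact subset_of_mem_matchings hM (heab ▸ heM) (by simp [heab])
        refine Finset.mem_biUnion.mpr ⟨b, hbs, ?_⟩
        refine Finset.mem_image.mpr ⟨M.erase e, ?_, ?_⟩
        · rw [mem_matchings]
          refine ⟨fun f hf => hcard f (Finset.mem_of_mem_erase hf), 
            hpd.subset (Finset.coe_subset.mpr (Finset.erase_subset _ _)), ?_⟩
          apply le_antisymm
          · apply Finset.sup_le
            intro f hf
            obtain ⟨hfe, hfM⟩ := Finset.mem_erase.mp hf
            have hfs : f ⊆ s := subset_of_mem_matchings hM hfM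
            have hdisj : Disjoint f e := hpd hfM heM hfe
            intro u huf
            have hue : u ∉ e := fun hue => Finset.disjoint_left.mp hdisj huf hue
            rw [heab] at hue
            simp only [Finset.mem_insert, Finset.mem_singleton] at hue
            push_neg at hue
            simp only [id] at huf ⊢
            exact Finset.mem_erase.mpr ⟨hue.2, Finset.mem_erase.mpr ⟨hue.1, hfs huf⟩⟩
          · intro u hu
            obtain ⟨hub, hu'⟩ := Finset.mem_erase.mp hu
            obtain ⟨hua, hus⟩ := Finset.mem_erase.mp hu'
            obtain ⟨f, hfM, huf⟩ := Finset.mem_sup.mp (hsup ▸ hus : u ∈ M.sup id)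
            have hfe : f ≠ e := by
              rintro rfl
              rw [heab] at huf
              have huf' : u = a ∨ u = b := by simpa using huf
              tauto
            exact Finset.mem_sup.mpr ⟨f, Finset.mem_erase.mpr ⟨hfe, hfM⟩, huf⟩
        · rw [← heab, Finset.insert_erase heM]
      · intro hM
        obtain ⟨b, hbs, hMim⟩ := Finset.mem_biUnion.mp hM
        obtain ⟨M', hM', rfl⟩ := Finset.mem_image.mp hMim
        obtain ⟨hba, hbs'⟩ := Finset.mem_erase.mp hbs
        rw [mem_matchings] at hM' ⊢
        obtain ⟨hcard, hpd, hsup⟩ := hM'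
        have hsub : ∀ f ∈ M', f ⊆ (s.erase a).erase b := fun f hf =>
          hsup ▸ Finset.le_sup (f := id) hf
        have habM' : ({a, b} : Finset α) ∉ M' := by
          intro h
          have := hsub _ h (by simp : a ∈ ({a, b} : Finset α))
          simp at this
        refine ⟨?_, ?_, ?_⟩
        · intro f hf
          rcases Finset.mem_insert.mp hf with rfl | hf'
          · rw [Finset.card_insert_of_notMem (by simp [Ne.symm hba]), Finset.card_singleton]
          · exact hcard f hf'
        · rw [Finset.coe_insert]
          apply hpd.insert
          intro f hfM' _
          apply Finset.disjoint_left.mpr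
          intro u hu huf
          have hmem := hsub f hfM' huf
          have hu' : u = a ∨ u = b := by simpa using hu
          rcases hu' with rfl | rfl <;> simp at hmem
        · rw [Finset.sup_insert, hsup]
          ext u
          simp only [Finset.sup_eq_union, id_eq, Finset.mem_union, Finset.mem_insert,
            Finset.mem_singleton, Finset.mem_erase]
          constructor
          · rintro (h | h)
            · rcases h with rfl | rfl
              · exact ha
              · exact hbs'
            · exact h.2.2
          · intro hus
            by_cases h1 : u = a
            · exact Or.inl (Or.inl h1)
            · by_cases h2 : u = b
              · exact Or.inl (Or.inr h2)
              · exact Or.inr ⟨h2, h1, hus⟩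
    rw [key, Finset.card_biUnion]
    · have hcongr : ∀ b ∈ s.erase a,
          ((matchings ((s.erase a).erase b)).image (insert {a, b})).card
            = Ffun (s.card - 2) := by
        intro b hb
        obtain ⟨hba, hbs⟩ := Finset.mem_erase.mp hb
        have hss : (s.erase a).erase b ⊂ s :=
          Finset.ssubset_of_subset_of_ssubset (Finset.erase_subset _ _) (Finset.erase_ssubset ha)
        have hcard2 : ((s.erase a).erase b).card = s.card - 2 := by
          rw [Finset.card_erase_of_mem (Finset.mem_erase.mpr ⟨hba, hbs⟩),
            Finset.card_erase_of_mem ha]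
          omega
        have hinj : Set.InjOn (insert ({a, b} : Finset α))
            (↑(matchings ((s.erase a).erase b)) : Set (Finset (Finset α))) := by
          intro M₁ h₁ M₂ h₂ heq
          have hni : ∀ M' ∈ matchings ((s.erase a).erase b), ({a, b} : Finset α) ∉ M' := by
            intro M' hM' h
            have := subset_of_mem_matchings hM' h (by simp : a ∈ ({a, b} : Finset α))
            simp at this
          have := congrArg (fun M => Finset.erase M {a, b}) heq
          simpa [Finset.erase_insert (hni M₁ (Finset.mem_coe.mp h₁)),
            Finset.erase_insert (hni M₂ (Finset.mem_coe.mp h₂))] using this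
        rw [Finset.card_image_of_injOn hinj, ih _ hss, hcard2]
      rw [Finset.sum_congr rfl hcongr, Finset.sum_const, smul_eq_mul,
        Finset.card_erase_of_mem ha, ← Ffun_rec _ (Finset.card_pos.mpr ⟨a, ha⟩)]
    · -- pairwise disjoint of the images
      intro b hb b' hb' hbb'
      apply Finset.disjoint_left.mpr
      intro M hMb hMb'
      obtain ⟨M₁, hM₁, rfl⟩ := Finset.mem_image.mp hMb
      obtain ⟨M₂, hM₂, heq⟩ := Finset.mem_image.mp hMb'
      have hb'mem : ({a, b'} : Finset α) ∈ insert ({a, b} : Finset α) M₁ := by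
        rw [← heq]; exact Finset.mem_insert_self _ _
      rcases Finset.mem_insert.mp hb'mem with h | h
      · apply hbb'
        have hbamem : b' ∈ ({a, b} : Finset α) := h ▸ (by simp : b' ∈ ({a, b'} : Finset α))
        have hne : b' ≠ a := (Finset.mem_erase.mp (Finset.mem_coe.mp hb')).1
        exact (by simpa [hne] using hbamem : b' = b).symm
      · have := subset_of_mem_matchings hM₁ h (by simp : a ∈ ({a, b'} : Finset α))
        simp at this

end Matchings

section EdgeSum

variable {n k l : ℕ} (w : Fin k → ℚ) (y : ℚ) (x : Fin l → ℚ)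

lemma edge_sum (e : Finset (Fin n)) (he : e.card = 2) :
    (∑ v ∈ Finset.univ.filter
       (fun v : Fin (k+1) ⊕ (Fin l × Fin n) =>
         v ≠ Sum.inl (Fin.last k) ∧ ∀ qv : Fin l × Fin n, v = Sum.inr qv → qv.2 ∈ e),
       Sum.elim (Fin.snoc w y : Fin (k+1) → ℚ) (fun qv => x qv.1) v)
      = ∑ p, w p + 2 * ∑ q, x q := by
  classical
  rw [Finset.sum_filter, Fintype.sum_sum_type]
  have h1 : (∑ p : Fin (k+1),
      if ((Sum.inl p : Fin (k+1) ⊕ (Fin l × Fin n)) ≠ Sum.inl (Fin.last k) ∧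
          ∀ qv : Fin l × Fin n, (Sum.inl p : Fin (k+1) ⊕ (Fin l × Fin n)) = Sum.inr qv → qv.2 ∈ e)
      then Sum.elim (Fin.snoc w y : Fin (k+1) → ℚ) (fun qv : Fin l × Fin n => x qv.1) (Sum.inl p) else 0)
      = ∑ p, w p := by
    simp only [ne_eq, Sum.inl.injEq, Sum.elim_inl, reduceCtorEq, false_implies, implies_true,
      and_true]
    rw [Fin.sum_univ_castSucc]
    simp [Fin.snoc_castSucc, (Fin.castSucc_lt_last _).ne]
  have h2 : (∑ qv : Fin l × Fin n,
      if ((Sum.inr qv : Fin (k+1) ⊕ (Fin l × Fin n)) ≠ Sum.inl (Fin.last k) ∧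
          ∀ qv' : Fin l × Fin n, (Sum.inr qv : Fin (k+1) ⊕ (Fin l × Fin n)) = Sum.inr qv' → qv'.2 ∈ e)
      then Sum.elim (Fin.snoc w y : Fin (k+1) → ℚ) (fun qv : Fin l × Fin n => x qv.1) (Sum.inr qv) else 0)
      = 2 * ∑ q, x q := by
    simp only [ne_eq, reduceCtorEq, not_false_iff, Sum.inr.injEq, Sum.elim_inr, true_and,
      forall_eq']
    rw [Fintype.sum_prod_type]
    have : ∀ q : Fin l, (∑ u : Fin n, if (q, u).2 ∈ e then x (q, u).1 else 0) = 2 * x q := by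
      intro q
      simp only
      rw [Finset.sum_ite_mem, Finset.univ_inter, Finset.sum_const, he]
      ring
    rw [Finset.sum_congr rfl (fun q _ => this q), ← Finset.mul_sum]
  rw [h1, h2]

end EdgeSum

open Classical in
/-- Proposition: the sum of the weights of labellings of the complete graph on
`Fin n` with `k+1` symmetric and `ℓ` directed colours in which the edges of
the last symmetric colour form a perfect matching of `{u : u < m}` equals
`F(m) · y^{⌊m/2⌋} · L_{k,ℓ}(C(n,2) − ⌊m/2⌋, w, x)`. -/
theorem weighted_labellings_perfectMatching (m n k l : ℕ) (hmn : m ≤ n)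
    (w : Fin k → ℚ) (y : ℚ) (x : Fin l → ℚ) :
    (∑ c ∈ Finset.univ.filter
        (fun c : Edge n → (Fin (k + 1) ⊕ (Fin l × Fin n)) =>
          IsLabelling c ∧ MatchesInitSeg m c),
      ∏ e : Edge n,
        Sum.elim ((Fin.snoc w y : Fin (k + 1) → ℚ)) (fun qv => x qv.1) (c e)) =
      (Ffun m : ℚ) * y ^ (m / 2) * Lkl k l (n.choose 2 - m / 2) w x := by
  classical
  set g : (Fin (k+1) ⊕ (Fin l × Fin n)) → ℚ :=
    Sum.elim ((Fin.snoc w y : Fin (k + 1) → ℚ)) (fun qv => x qv.1) with hg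
  set S : Finset (Fin n) := Finset.univ.filter (fun u => u.val < m) with hS
  set emb : Edge n ↪ Finset (Fin n) := Function.Embedding.subtype _ with hemb
  have hScard : S.card = m := by
    have hSeq : S = Finset.map (Fin.castLEEmb hmn) Finset.univ := by
      ext u
      simp only [hS, Finset.mem_filter, Finset.mem_univ, true_and, Finset.mem_map,
        Fin.castLEEmb_apply]
      constructor
      · intro hu
        exact ⟨⟨u.val, hu⟩, rfl⟩
      · rintro ⟨v, rfl⟩
        exact v.isLt
    rw [hSeq, Finset.card_map, Finset.card_univ, Fintype.card_fin]
  set T : Finset (Finset (Edge n)) :=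
    Finset.univ.filter (fun M => M.map emb ∈ matchings S) with hT
  have hTcard : T.card = Ffun m := by
    rw [← hScard, ← card_matchings S]
    apply Finset.card_bij (fun M _ => M.map emb)
    · intro M hM
      exact (Finset.mem_filter.mp hM).2
    · intro M₁ h₁ M₂ h₂ heq
      exact Finset.map_injective emb heq
    · intro M' hM'
      refine ⟨M'.subtype (fun e => e.card = 2), ?_, ?_⟩
      · rw [hT, Finset.mem_filter]
        refine ⟨Finset.mem_univ _, ?_⟩
        rw [hemb, Finset.subtype_map,
          Finset.filter_true_of_mem (fun e he => (mem_matchings.mp hM').1 e he)]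
        exact hM'
      · rw [hemb, Finset.subtype_map,
          Finset.filter_true_of_mem (fun e he => (mem_matchings.mp hM').1 e he)]
  have hMcard : ∀ M ∈ T, M.card = m / 2 ∧ 2 * M.card = m := by
    intro M hM
    have hM' := (Finset.mem_filter.mp hM).2
    obtain ⟨h2, hpd, hsup⟩ := mem_matchings.mp hM'
    have : m = 2 * M.card := by
      have h1 : S = (M.map emb).biUnion id := by rw [← hsup, Finset.sup_eq_biUnion]
      have h2' : S.card = ∑ e ∈ M.map emb, (id e).card := by
        rw [h1]
        exact Finset.card_biUnion (fun e he f hf hef => hpd he hf hef)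
      rw [← hScard, h2']
      simp only [id_eq]
      rw [Finset.sum_congr rfl (fun e he => h2 e he), Finset.sum_const,
        Finset.card_map, smul_eq_mul, mul_comm]
    omega
  -- the fiber map
  set φ : (Edge n → (Fin (k + 1) ⊕ (Fin l × Fin n))) → Finset (Edge n) :=
    fun c => Finset.univ.filter (fun e => c e = Sum.inl (Fin.last k)) with hφ
  have hmaps : ∀ c ∈ Finset.univ.filter
      (fun c : Edge n → (Fin (k + 1) ⊕ (Fin l × Fin n)) =>
        IsLabelling c ∧ MatchesInitSeg m c), φ c ∈ T := by
    intro c hc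
    obtain ⟨-, hlab, h1, h2, h3⟩ := Finset.mem_filter.mp hc
    rw [hT, Finset.mem_filter]
    refine ⟨Finset.mem_univ _, mem_matchings.mpr ⟨?_, ?_, ?_⟩⟩
    · intro f hf
      obtain ⟨e, he, rfl⟩ := Finset.mem_map.mp hf
      exact e.2
    · intro f hf f' hf' hff'
      obtain ⟨e, he, rfl⟩ := Finset.mem_map.mp (Finset.mem_coe.mp hf)
      obtain ⟨e', he', rfl⟩ := Finset.mem_map.mp (Finset.mem_coe.mp hf')
      have : e ≠ e' := fun h => hff' (by rw [h])
      exact h2 e e' (Finset.mem_filter.mp he).2 (Finset.mem_filter.mp he').2 this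
    · apply le_antisymm
      · apply Finset.sup_le
        intro f hf
        obtain ⟨e, he, rfl⟩ := Finset.mem_map.mp hf
        intro u hu
        rw [hS, Finset.mem_filter]
        exact ⟨Finset.mem_univ _, h1 e (Finset.mem_filter.mp he).2 u hu⟩
      · intro u hu
        rw [hS, Finset.mem_filter] at hu
        obtain ⟨e, hce, hue⟩ := h3 u hu.2
        apply Finset.mem_sup.mpr
        exact ⟨e.val, Finset.mem_map.mpr ⟨e, Finset.mem_filter.mpr ⟨Finset.mem_univ _, hce⟩, rfl⟩,
          hue⟩
  rw [← Finset.sum_fiberwise_of_maps_to hmaps]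
  -- evaluate each fiber
  have hfib : ∀ M ∈ T,
      (∑ c ∈ (Finset.univ.filter
        (fun c : Edge n → (Fin (k + 1) ⊕ (Fin l × Fin n)) =>
          IsLabelling c ∧ MatchesInitSeg m c)).filter (fun c => φ c = M),
        ∏ e : Edge n, g (c e))
      = y ^ (m / 2) * (∑ p, w p + 2 * ∑ q, x q) ^ (n.choose 2 - m / 2) := by
    intro M hM
    obtain ⟨hMhalf, hM2⟩ := hMcard M hM
    have hMmatch := (Finset.mem_filter.mp hM).2
    obtain ⟨hm2, hmpd, hmsup⟩ := mem_matchings.mp hMmatch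
    set t : Edge n → Finset (Fin (k + 1) ⊕ (Fin l × Fin n)) := fun e =>
      if e ∈ M then {Sum.inl (Fin.last k)}
      else Finset.univ.filter (fun v => v ≠ Sum.inl (Fin.last k) ∧
        ∀ qv : Fin l × Fin n, v = Sum.inr qv → qv.2 ∈ e.val) with ht
    have hfiber : (Finset.univ.filter
        (fun c : Edge n → (Fin (k + 1) ⊕ (Fin l × Fin n)) =>
          IsLabelling c ∧ MatchesInitSeg m c)).filter (fun c => φ c = M)
        = Fintype.piFinset t := by
      ext c
      rw [Finset.mem_filter, Finset.mem_filter, Fintype.mem_piFinset]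
      constructor
      · rintro ⟨⟨-, hlab, -⟩, hφc⟩
        intro e
        by_cases he : e ∈ M
        · rw [ht]
          simp only [if_pos he, Finset.mem_singleton]
          have : e ∈ φ c := hφc ▸ he
          exact (Finset.mem_filter.mp this).2
        · rw [ht]
          simp only [if_neg he, Finset.mem_filter]
          refine ⟨Finset.mem_univ _, ?_, ?_⟩
          · intro hc
            exact he (hφc ▸ Finset.mem_filter.mpr ⟨Finset.mem_univ _, hc⟩)
          · rintro ⟨q, v⟩ hqv
            exact hlab e q v hqv
      · intro hc
        have hiff : ∀ e : Edge n, c e = Sum.inl (Fin.last k) ↔ e ∈ M := by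
          intro e
          by_cases he : e ∈ M
          · have := hc e
            rw [ht] at this
            simp only [if_pos he, Finset.mem_singleton] at this
            exact ⟨fun _ => he, fun _ => this⟩
          · have := hc e
            rw [ht] at this
            simp only [if_neg he, Finset.mem_filter] at this
            exact ⟨fun h => absurd h this.2.1, fun h => absurd h he⟩
        have hφM : φ c = M := by
          ext e
          rw [hφ]
          simp only [Finset.mem_filter, Finset.mem_univ, true_and]
          exact hiff e
        refine ⟨⟨Finset.mem_univ _, ?_, ?_, ?_, ?_⟩, hφM⟩
        · intro e q v hqv
          by_cases he : e ∈ M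
          · exfalso
            have := hc e
            rw [ht] at this
            simp only [if_pos he, Finset.mem_singleton] at this
            rw [this] at hqv
            exact absurd hqv (by simp)
          · have := hc e
            rw [ht] at this
            simp only [if_neg he, Finset.mem_filter] at this
            exact this.2.2 (q, v) hqv
        · intro e hce u hu
          have he : e ∈ M := (hiff e).mp hce
          have hmem : (e.val : Finset (Fin n)) ∈ M.map emb := Finset.mem_map.mpr ⟨e, he, rfl⟩
          have : e.val ⊆ S := by
            rw [← hmsup]
            exact Finset.le_sup (f := id) (s := M.map emb) hmem
          have := this hu
          rw [hS, Finset.mem_filter] at this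
          exact this.2
        · intro e e' hce hce' hee'
          have he : e ∈ M := (hiff e).mp hce
          have he' : e' ∈ M := (hiff e').mp hce'
          refine hmpd (Finset.mem_coe.mpr (Finset.mem_map.mpr ⟨e, he, rfl⟩))
            (Finset.mem_coe.mpr (Finset.mem_map.mpr ⟨e', he', rfl⟩)) ?_
          exact fun h => hee' (Subtype.coe_injective h)
        · intro u hu
          have : u ∈ S := by rw [hS, Finset.mem_filter]; exact ⟨Finset.mem_univ _, hu⟩
          rw [← hmsup] at this
          obtain ⟨f, hf, huf⟩ := Finset.mem_sup.mp this
          obtain ⟨e, he, rfl⟩ := Finset.mem_map.mp hf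
          exact ⟨e, (hiff e).mpr he, huf⟩
    rw [hfiber, ← Finset.prod_univ_sum t (fun _ v => g v),
      ← Finset.prod_filter_mul_prod_filter_not Finset.univ (· ∈ M)]
    have hfilt : Finset.univ.filter (· ∈ M) = M := Finset.filter_univ_mem M
    have hin : ∀ e ∈ M, (∑ v ∈ t e, g v) = y := by
      intro e he
      rw [ht]
      simp only [if_pos he, Finset.sum_singleton, hg, Sum.elim_inl, Fin.snoc_last]
    have hout : ∀ e ∈ Finset.univ.filter (· ∉ M), (∑ v ∈ t e, g v)
        = ∑ p, w p + 2 * ∑ q, x q := by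
      intro e he
      rw [ht]
      simp only [if_neg (Finset.mem_filter.mp he).2]
      exact edge_sum w y x e.val e.2
    rw [hfilt, Finset.prod_congr rfl hin, Finset.prod_congr rfl hout,
      Finset.prod_const, Finset.prod_const, hMhalf]
    congr 2
    have hcards := Finset.card_filter_add_card_filter_not
      (s := (Finset.univ : Finset (Edge n))) (p := (· ∈ M))
    have hEdge : (Finset.univ : Finset (Edge n)).card = n.choose 2 := by
      rw [Finset.card_univ]
      rw [show Fintype.card (Edge n) = (Fintype.card (Fin n)).choose 2 from
        Fintype.card_finset_len 2, Fintype.card_fin]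
    rw [hfilt] at hcards
    omega
  rw [Finset.sum_congr rfl hfib, Finset.sum_const, hTcard, nsmul_eq_mul,
    Lkl_eq, mul_assoc]
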